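/- Let λ be a regular uncountable cardinal, and let S ⊆ λ be stationary. Then DSR(1, S) implies Refl(ω, S): if for every sequence ⟨S_α : α < λ⟩ of stationary subsets of S there are an ordinal γ < λ of uncountable cofinality and a club F ⊆ γ such that for every α ∈ F, S_α ∩ γ is stationary in γ, then for every countable family ⟨T_n : n < ω⟩ of stationary subsets of S there is an ordinal δ < λ of uncountable cofinality such that T_n ∩ δ is stationary in δ for all n < ω. -/

import Mathlib

/-- `α` is a limit point of the set of ordinals `C`:
`α > 0` and `C ∩ α` is unbounded in `α`. -/
def IsLimitPointOf (C : Set Ordinal.{0}) (α : Ordinal.{0}) : Prop :=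
  0 < α ∧ ∀ β < α, ∃ γ ∈ C, β < γ ∧ γ < α

/-- `C` is a club (closed and unbounded) subset of the ordinal `δ`. -/
def IsClubIn (C : Set Ordinal.{0}) (δ : Ordinal.{0}) : Prop :=
  C ⊆ Set.Iio δ ∧ (∀ β < δ, ∃ γ ∈ C, β < γ) ∧ ∀ α < δ, IsLimitPointOf C α → α ∈ C

/-- `S` is stationary in `δ`: `S` meets every club subset of `δ`. -/
def IsStationaryIn (S : Set Ordinal.{0}) (δ : Ordinal.{0}) : Prop :=
  ∀ C, IsClubIn C δ → (S ∩ C).Nonempty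

/-!
Split the `T n` into pairwise disjoint stationary pieces `P m ⊆ T (m.unpair.1)`. This is possible
because, by Solovay's theorem, a stationary subset of `λ` splits into `λ` disjoint stationary sets,
and countably many stationary sets `Z n` can each lose stationarity on at most one of them; so a
stationary piece can always be carved out while the remainders of all `T n` stay stationary.

Now apply `DSR(1, S)` to the sequence sending every point of `P m` to `P (m + 1)`, obtaining `γ`
and a club `F ⊆ γ`. Any point of `F` shows that some `P j` reflects at `γ`; and if `P m` reflects at
`γ`, then `P m ∩ γ` meets `F`, which forces `P (m + 1)` to reflect at `γ`. Hence all `P m` with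
`m ≥ j` reflect at `γ`, and every `T n` contains one of them.
-/

open Set Ordinal Cardinal Order Function

section Clubs

variable {δ α : Ordinal.{0}} {C D : Set Ordinal.{0}}

theorem IsLimitPointOf.mono (hCD : C ⊆ D) (h : IsLimitPointOf C α) : IsLimitPointOf D α :=
  ⟨h.1, fun β hβ => (h.2 β hβ).imp fun _ ⟨hγ, hβγ⟩ => ⟨hCD hγ, hβγ⟩⟩

theorem IsLimitPointOf.isSuccLimit (h : IsLimitPointOf C α) : IsSuccLimit α := by
  refine isSuccLimit_iff.mpr ⟨h.1.ne', isSuccPrelimit_iff_succ_lt.mpr fun β hβ => ?_⟩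
  obtain ⟨γ, -, hβγ, hγα⟩ := h.2 β hβ
  exact (succ_le_of_lt hβγ).trans_lt hγα

theorem isSuccLimit_of_aleph0_lt_cof (hδ : ℵ₀ < δ.cof) : IsSuccLimit δ :=
  one_lt_cof_iff.mp (one_lt_aleph0.trans hδ)

theorem exists_closure_point (hδ : ℵ₀ < δ.cof) {g : Ordinal.{0} → Ordinal.{0}}
    (hg : ∀ b < δ, g b < δ) {b : Ordinal.{0}} (hb : b < δ) :
    ∃ α, b < α ∧ α < δ ∧ ∀ c < α, ∃ d, c < d ∧ d < α ∧ g d < α := by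
  set a : ℕ → Ordinal.{0} := fun n => (fun c => max (g c) (succ c))^[n] b
  have ha_succ (n : ℕ) : a (n + 1) = max (g (a n)) (succ (a n)) :=
    Function.iterate_succ_apply' _ n b
  have ha_lt (n : ℕ) : a n < δ := by
    induction n with
    | zero => exact hb
    | succ n ih =>
      rw [ha_succ]
      exact max_lt (hg _ ih) ((isSuccLimit_of_aleph0_lt_cof hδ).succ_lt ih)
  have ha_lt_succ (n : ℕ) : a n < a (n + 1) := ha_succ n ▸ (lt_succ _).trans_le (le_max_right _ _)
  have ha_lt_iSup (n : ℕ) : a n < ⨆ k, a k := (ha_lt_succ n).trans_le (Ordinal.le_iSup a _)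
  refine ⟨⨆ k, a k, ha_lt_iSup 0, iSup_lt_of_lt_cof (by simpa using hδ) ha_lt, fun c hc => ?_⟩
  obtain ⟨n, hn⟩ := Ordinal.lt_iSup_iff.mp hc
  exact ⟨a n, hn, ha_lt_iSup n, (le_max_left _ _).trans_lt (ha_succ n ▸ ha_lt_iSup (n + 1))⟩

theorem IsClubIn.inter (hδ : ℵ₀ < δ.cof) (hC : IsClubIn C δ) (hD : IsClubIn D δ) :
    IsClubIn (C ∩ D) δ := by
  refine ⟨fun x hx => hC.1 hx.1, fun b hb => ?_, fun α hα hlim =>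
    ⟨hC.2.2 α hα (hlim.mono inter_subset_left), hD.2.2 α hα (hlim.mono inter_subset_right)⟩⟩
  choose! gC hgC using hC.2.1
  choose! gD hgD using hD.2.1
  have hgC_lt {c} (hc : c < δ) : gC c < δ := hC.1 (hgC c hc).1
  obtain ⟨α, hbα, hαδ, hcl⟩ :=
    exists_closure_point hδ (g := gD ∘ gC) (fun c hc => hD.1 (hgD _ (hgC_lt hc)).1) hb
  refine ⟨α, ⟨hC.2.2 α hαδ ⟨pos_of_gt hbα, fun c hc => ?_⟩,
    hD.2.2 α hαδ ⟨pos_of_gt hbα, fun c hc => ?_⟩⟩, hbα⟩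
  · obtain ⟨d, hcd, hdα, hgd⟩ := hcl c hc
    have hdδ := hdα.trans hαδ
    exact ⟨gC d, (hgC d hdδ).1, hcd.trans (hgC d hdδ).2, (hgD _ (hgC_lt hdδ)).2.trans hgd⟩
  · obtain ⟨d, hcd, hdα, hgd⟩ := hcl c hc
    have hdδ := hdα.trans hαδ
    exact ⟨gD (gC d), (hgD _ (hgC_lt hdδ)).1,
      (hcd.trans (hgC d hdδ).2).trans (hgD _ (hgC_lt hdδ)).2, hgd⟩

theorem IsClubIn.limitPoints (hδ : ℵ₀ < δ.cof) (hC : IsClubIn C δ) :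
    IsClubIn {x | x < δ ∧ IsLimitPointOf C x} δ := by
  refine ⟨fun x hx => hx.1, fun b hb => ?_, fun α hα hlim => ⟨hα, hlim.1, fun b hb => ?_⟩⟩
  · choose! g hg using hC.2.1
    obtain ⟨α, hbα, hαδ, hcl⟩ := exists_closure_point hδ (fun c hc => hC.1 (hg c hc).1) hb
    refine ⟨α, ⟨hαδ, pos_of_gt hbα, fun c hc => ?_⟩, hbα⟩
    obtain ⟨d, hcd, hdα, hgd⟩ := hcl c hc
    exact ⟨g d, (hg d (hdα.trans hαδ)).1, hcd.trans (hg d (hdα.trans hαδ)).2, hgd⟩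
  · obtain ⟨y, hy, hby, hyα⟩ := hlim.2 b hb
    obtain ⟨z, hz, hbz, hzy⟩ := hy.2.2 b hby
    exact ⟨z, hz, hbz, hzy.trans hyα⟩

theorem isClubIn_isSuccLimit (hδ : ℵ₀ < δ.cof) : IsClubIn {x | x < δ ∧ IsSuccLimit x} δ := by
  refine ⟨fun x hx => hx.1, fun b hb => ?_, fun α hα hlim => ⟨hα, hlim.isSuccLimit⟩⟩
  obtain ⟨α, hbα, hαδ, hcl⟩ := exists_closure_point hδ (g := id) (fun _ => id) hb
  have hα : IsLimitPointOf univ α := ⟨pos_of_gt hbα, fun c hc => by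
    obtain ⟨d, hcd, hdα, -⟩ := hcl c hc
    exact ⟨d, trivial, hcd, hdα⟩⟩
  exact ⟨α, ⟨hαδ, hα.isSuccLimit⟩, hbα⟩

theorem isClubIn_Ioo (hδ : IsSuccLimit δ) {a : Ordinal.{0}} (ha : a < δ) :
    IsClubIn (Ioo a δ) δ := by
  refine ⟨Ioo_subset_Iio_self, fun b hb => ⟨succ (max a b), ⟨?_, hδ.succ_lt (max_lt ha hb)⟩, ?_⟩,
    fun x hx hlim => ⟨?_, hx⟩⟩
  · exact (le_max_left a b).trans_lt (lt_succ _)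
  · exact (le_max_right a b).trans_lt (lt_succ _)
  · obtain ⟨y, hy, -, hyx⟩ := hlim.2 0 hlim.1
    exact hy.1.trans hyx

theorem not_bddAbove_union_Ici (s : Set Ordinal.{0}) (β : Ordinal.{0}) : ¬BddAbove (s ∪ Ici β) :=
  fun h => not_bddAbove_Ici β (h.mono subset_union_right)

end Clubs

section Stationary

variable {δ α : Ordinal.{0}} {S T C : Set Ordinal.{0}}

theorem not_isStationaryIn_iff : ¬IsStationaryIn S δ ↔ ∃ C, IsClubIn C δ ∧ Disjoint S C := by
  simp [IsStationaryIn, Set.not_nonempty_iff_eq_empty, Set.disjoint_iff_inter_eq_empty]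

theorem IsStationaryIn.mono (hST : S ⊆ T) (hS : IsStationaryIn S δ) : IsStationaryIn T δ :=
  fun C hC => (hS C hC).mono (inter_subset_inter_left C hST)

theorem IsStationaryIn.inter_club (hδ : ℵ₀ < δ.cof) (hS : IsStationaryIn S δ)
    (hC : IsClubIn C δ) : IsStationaryIn (S ∩ C) δ := fun D hD => by
  obtain ⟨x, hxS, hxC, hxD⟩ := hS (C ∩ D) (hC.inter hδ hD)
  exact ⟨x, ⟨hxS, hxC⟩, hxD⟩

theorem IsStationaryIn.of_union (hδ : ℵ₀ < δ.cof) (h : IsStationaryIn (S ∪ T) δ) :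
    IsStationaryIn S δ ∨ IsStationaryIn T δ := by
  by_contra! hST
  obtain ⟨C, hC, hSC⟩ := not_isStationaryIn_iff.mp hST.1
  obtain ⟨D, hD, hTD⟩ := not_isStationaryIn_iff.mp hST.2
  obtain ⟨x, hx | hx, hxC, hxD⟩ := h (C ∩ D) (hC.inter hδ hD)
  · exact hSC.ne_of_mem hx hxC rfl
  · exact hTD.ne_of_mem hx hxD rfl

theorem IsStationaryIn.exists_mem_lt (hδ : IsSuccLimit δ) (hS : IsStationaryIn S δ) :
    ∃ x ∈ S, x < δ := by
  obtain ⟨x, hxS, hx⟩ := hS _ (isClubIn_Ioo hδ hδ.pos)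
  exact ⟨x, hxS, hx.2⟩

-- A cofinal `ω`-sequence of successor ordinals is a club avoiding `S`.
theorem not_isStationaryIn_of_cof_eq_aleph0 (hα : α.cof = ℵ₀) (hS : ∀ x ∈ S, IsSuccLimit x) :
    ¬IsStationaryIn S α := by
  obtain ⟨f, hf⟩ := exists_isFundamentalSeq (a := ω) (o := α) (by rw [hα, ord_aleph0])
  set z : ℕ → Ordinal.{0} := fun n => succ (f ⟨n, natCast_lt_omega0 n⟩).1
  have hz_mono : StrictMono z := fun m n hmn =>
    succ_lt_succ (hf.strictMono (show (m : Ordinal) < n by exact_mod_cast hmn))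
  have hz_lt (n : ℕ) : z n < α :=
    (one_lt_cof_iff.mp (by rw [hα]; exact one_lt_aleph0)).succ_lt (f _).2
  have hz_cofinal : ∀ b < α, ∃ n, b < z n := fun b hb => by
    obtain ⟨_, ⟨⟨i, hi⟩, rfl⟩, hbi⟩ := hf.isCofinal_range ⟨b, hb⟩
    obtain ⟨n, rfl⟩ := lt_omega0.mp hi
    exact ⟨n, lt_succ_of_le hbi⟩
  refine not_isStationaryIn_iff.mpr ⟨range z, ⟨?_, fun b hb => ?_, fun x hx hlim => ?_⟩, ?_⟩
  · rintro _ ⟨n, rfl⟩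
    exact hz_lt n
  · obtain ⟨n, hn⟩ := hz_cofinal b hb
    exact ⟨z n, mem_range_self n, hn⟩
  · have hz_lt_x (n : ℕ) : z n < x := by
      induction n with
      | zero =>
        obtain ⟨_, ⟨m, rfl⟩, -, hmx⟩ := hlim.2 0 hlim.1
        exact (hz_mono.monotone (Nat.zero_le m)).trans_lt hmx
      | succ n ih =>
        obtain ⟨_, ⟨m, rfl⟩, hnm, hmx⟩ := hlim.2 (z n) ih
        exact (hz_mono.monotone (hz_mono.lt_iff_lt.mp hnm)).trans_lt hmx
    obtain ⟨n, hn⟩ := hz_cofinal x hx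
    exact absurd hn (hz_lt_x n).not_gt
  · rw [disjoint_left]
    rintro _ hx ⟨n, rfl⟩
    exact not_isSuccLimit_succ _ (hS _ hx)

theorem IsStationaryIn.isStationaryIn_nonreflecting {W : Set Ordinal.{0}} (hδ : ℵ₀ < δ.cof)
    (hW : IsStationaryIn W δ) (hWlim : ∀ x ∈ W, IsSuccLimit x) :
    IsStationaryIn {β ∈ W | ¬IsStationaryIn (W ∩ Iio β) β} δ := by
  intro D hD
  set L := {x | x < δ ∧ IsLimitPointOf D x}
  have hα : sInf (W ∩ L) ∈ W ∩ L := csInf_mem (hW L (hD.limitPoints hδ))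
  set α := sInf (W ∩ L)
  refine ⟨α, ⟨hα.1, fun hstat => ?_⟩, hD.2.2 α hα.2.1 hα.2.2⟩
  rcases (aleph0_le_cof_iff.mpr (one_lt_cof_iff.mpr (hWlim α hα.1))).eq_or_lt with hcof | hcof
  · exact not_isStationaryIn_of_cof_eq_aleph0 hcof.symm (fun x hx => hWlim x hx.1) hstat
  have hDα : IsClubIn (D ∩ Iio α) α := by
    refine ⟨inter_subset_right, fun b hb => ?_, fun x hxα hlim =>
      ⟨hD.2.2 x (hxα.trans hα.2.1) (hlim.mono inter_subset_left), hxα⟩⟩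
    obtain ⟨y, hy, hby, hyα⟩ := hα.2.2.2 b hb
    exact ⟨y, ⟨hy, hyα⟩, hby⟩
  -- a point of `W ∩ α` that is a limit point of `D` would undercut the minimality of `α`
  obtain ⟨β, ⟨hβW, hβα⟩, -, hβlim⟩ := hstat _ (hDα.limitPoints hcof)
  have hβL : β ∈ W ∩ L := ⟨hβW, hβα.trans hα.2.1, hβlim.mono inter_subset_left⟩
  exact (csInf_le' hβL).not_gt hβα

end Stationary

section Regular

variable {κ : Cardinal.{0}} {X : Set Ordinal.{0}}

theorem aleph0_lt_cof_ord (hκ : κ.IsRegular) (hκω : ℵ₀ < κ) : ℵ₀ < κ.ord.cof := by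
  rwa [hκ.cof_ord]

theorem iSup_Iio_lt_ord (hκ : κ.IsRegular) {a : Ordinal.{0}} (ha : a < κ.ord)
    {f : Ordinal.{0} → Ordinal.{0}} (hf : ∀ ξ < a, f ξ < κ.ord) : ⨆ ξ : Iio a, f ξ < κ.ord := by
  apply lift_iSup_lt_of_lt_cof (f := fun ξ : Iio a => f ξ) _ fun ξ => hf ξ ξ.2
  rw [Cardinal.lift_uzero, Cardinal.mk_Iio_ordinal, ← lift_cof, hκ.cof_ord, Cardinal.lift_lt]
  exact lt_ord.mp ha

theorem isClubIn_diagInter (hκ : κ.IsRegular) (hκω : ℵ₀ < κ) {C : Ordinal.{0} → Set Ordinal.{0}}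
    (hC : ∀ ξ < κ.ord, IsClubIn (C ξ) κ.ord) :
    IsClubIn {β | β < κ.ord ∧ ∀ ξ < β, β ∈ C ξ} κ.ord := by
  refine ⟨fun x hx => hx.1, fun b hb => ?_, fun α hα hlim => ⟨hα, fun ξ hξ => ?_⟩⟩
  · choose! p hp using fun ξ (hξ : ξ < κ.ord) => (hC ξ hξ).2.1
    have hg : ∀ a < κ.ord, ⨆ ξ : Iio a, p ξ a < κ.ord := fun a ha =>
      iSup_Iio_lt_ord hκ ha fun ξ hξ => (hC ξ (hξ.trans ha)).1 (hp ξ (hξ.trans ha) a ha).1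
    obtain ⟨α, hbα, hακ, hcl⟩ := exists_closure_point (aleph0_lt_cof_ord hκ hκω) hg hb
    refine ⟨α, ⟨hακ, fun ξ hξ => (hC ξ (hξ.trans hακ)).2.2 α hακ ⟨pos_of_gt hbα, fun c hc => ?_⟩⟩,
      hbα⟩
    obtain ⟨d, hcd, hdα, hgd⟩ := hcl (max ξ c) (max_lt hξ hc)
    have hξd : ξ < d := (le_max_left _ _).trans_lt hcd
    have hpd := hp ξ (hξ.trans hακ) d (hdα.trans hακ)
    exact ⟨p ξ d, hpd.1, ((le_max_right _ _).trans_lt hcd).trans hpd.2,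
      (Ordinal.le_iSup (fun ξ : Iio d => p ξ d) ⟨ξ, hξd⟩).trans_lt hgd⟩
  · refine (hC ξ (hξ.trans hα)).2.2 α hα ⟨hlim.1, fun c hc => ?_⟩
    obtain ⟨y, hy, hcy, hyα⟩ := hlim.2 (max ξ c) (max_lt hξ hc)
    exact ⟨y, hy.2 ξ ((le_max_left ξ c).trans_lt hcy), (le_max_right ξ c).trans_lt hcy, hyα⟩

/-- Fodor's pressing-down lemma. -/
theorem IsStationaryIn.exists_isStationaryIn_fiber (hκ : κ.IsRegular) (hκω : ℵ₀ < κ)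
    (hX : IsStationaryIn X κ.ord) {f : Ordinal.{0} → Ordinal.{0}} (hf : ∀ α ∈ X, f α < α) :
    ∃ v, IsStationaryIn {α ∈ X | f α = v} κ.ord := by
  by_contra! h
  choose D hD hXD using fun v => not_isStationaryIn_iff.mp (h v)
  obtain ⟨x, hxX, -, hxD⟩ := hX _ (isClubIn_diagInter hκ hκω fun ξ _ => hD ξ)
  exact (hXD (f x)).ne_of_mem ⟨hxX, rfl⟩ (hxD (f x) (hf x hxX)) rfl

-- `d β ∪ Ici β` is unbounded, so `enumOrd` lists `d β` increasingly and then continues above `β`.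
theorem exists_enumOrd_isStationaryIn (hκ : κ.IsRegular) (hκω : ℵ₀ < κ) {A : Set Ordinal.{0}}
    (hA : IsStationaryIn A κ.ord) (hAlim : ∀ β ∈ A, IsSuccLimit β)
    {d : Ordinal.{0} → Set Ordinal.{0}} (hd : ∀ β ∈ A, IsClubIn (d β) β ∧ Disjoint (d β) A) :
    ∃ ξ, ∀ η < κ.ord, IsStationaryIn
      {β ∈ A | enumOrd (d β ∪ Ici β) ξ < β ∧ η ≤ enumOrd (d β ∪ Ici β) ξ} κ.ord := by
  have hcof := aleph0_lt_cof_ord hκ hκω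
  have hκlim := isSuccLimit_of_aleph0_lt_cof hcof
  set e : Ordinal.{0} → Ordinal.{0} → Ordinal.{0} := fun β => enumOrd (d β ∪ Ici β)
  -- Otherwise, with `δ ∈ A` in the diagonal intersection of the witnessing clubs and `β ∈ A` a
  -- limit point of it above `δ`, the first `δ` elements of `d β` all lie below `δ`.
  by_contra! h
  choose η hη hns using h
  choose C hC hdisj using fun ξ => not_isStationaryIn_iff.mp (hns ξ)
  have hΔ : IsClubIn {β | β < κ.ord ∧ ∀ ξ < β, β ∈ C ξ ∩ Ioo (η ξ) κ.ord} κ.ord :=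
    isClubIn_diagInter hκ hκω fun ξ _ => (hC ξ).inter hcof (isClubIn_Ioo hκlim (hη ξ))
  obtain ⟨δ, hδA, hδΔ⟩ := hA _ hΔ
  obtain ⟨β, hβA, ⟨hβκ, hβlim⟩, hδβ, -⟩ :=
    hA _ ((hΔ.limitPoints hcof).inter hcof (isClubIn_Ioo hκlim hδΔ.1))
  have hβΔ := hΔ.2.2 β hβκ hβlim
  obtain ⟨hdβ, hdβA⟩ := hd β hβA
  have he_lt : ∀ ξ, ξ < δ → e β ξ < δ := by
    intro ξ
    induction ξ using WellFoundedLT.induction with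
    | _ ξ ih =>
      intro hξ
      have he_lt_β : e β ξ < β := by
        obtain ⟨x, hx, hδx⟩ := hdβ.2.1 δ hδβ
        refine (enumOrd_le_of_forall_lt (Or.inl hx) fun ζ hζ => ?_).trans_lt (hdβ.1 hx)
        exact (ih ζ hζ (hζ.trans hξ)).trans hδx
      have he_lt_η : e β ξ < η ξ := lt_of_not_ge fun hle =>
        (hdisj ξ).ne_of_mem ⟨hβA, he_lt_β, hle⟩ (hβΔ.2 ξ (hξ.trans hδβ)).1 rfl
      exact he_lt_η.trans (hδΔ.2 ξ hξ).2.1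
  -- hence `δ ∈ A` is a limit point of `d β`, which avoids `A`
  have hδd : δ ∈ d β := by
    refine hdβ.2.2 δ hδβ ⟨(hAlim δ hδA).pos, fun b hb => ⟨e β (succ b), ?_, ?_, ?_⟩⟩
    · have hsb := he_lt _ ((hAlim δ hδA).succ_lt hb)
      exact (enumOrd_mem (not_bddAbove_union_Ici _ _) _).resolve_right
        fun h => (h.trans_lt (hsb.trans hδβ)).false
    · exact (lt_succ b).trans_le (le_enumOrd_self (not_bddAbove_union_Ici _ _))
    · exact he_lt _ ((hAlim δ hδA).succ_lt hb)
  exact hdβA.ne_of_mem hδd hδA rfl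

/-- Solovay's splitting of a stationary subset of `κ` into `κ` disjoint stationary sets. -/
theorem IsStationaryIn.exists_pairwise_disjoint (hκ : κ.IsRegular) (hκω : ℵ₀ < κ)
    (hX : IsStationaryIn X κ.ord) :
    ∃ P : Ordinal.{0} → Set Ordinal.{0}, (∀ v, P v ⊆ X) ∧ Pairwise (Disjoint on P) ∧
      ∀ η < κ.ord, ∃ v, η ≤ v ∧ v < κ.ord ∧ IsStationaryIn (P v) κ.ord := by
  have hcof := aleph0_lt_cof_ord hκ hκω
  set W := X ∩ {x | x < κ.ord ∧ IsSuccLimit x}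
  have hWlim : ∀ x ∈ W, IsSuccLimit x := fun x hx => hx.2.2
  set A := {β ∈ W | ¬IsStationaryIn (W ∩ Iio β) β}
  have hA : IsStationaryIn A κ.ord :=
    (hX.inter_club hcof (isClubIn_isSuccLimit hcof)).isStationaryIn_nonreflecting hcof hWlim
  have hd : ∀ β ∈ A, ∃ d, IsClubIn d β ∧ Disjoint d A := fun β hβ => by
    obtain ⟨C, hC, hWC⟩ := not_isStationaryIn_iff.mp hβ.2
    exact ⟨C, hC, disjoint_left.mpr fun x hxC hxA => hWC.ne_of_mem ⟨hxA.1, hC.1 hxC⟩ hxC rfl⟩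
  choose! d hd using hd
  obtain ⟨ξ, hξ⟩ := exists_enumOrd_isStationaryIn hκ hκω hA (fun β hβ => hWlim β hβ.1) hd
  set e : Ordinal.{0} → Ordinal.{0} := fun β => enumOrd (d β ∪ Ici β) ξ
  refine ⟨fun v => {β ∈ A | e β = v ∧ v < β}, fun v β hβ => hβ.1.1.1, ?_, fun η hη => ?_⟩
  · intro v w hvw
    rw [Function.onFun, disjoint_left]
    rintro β ⟨-, rfl, -⟩ ⟨-, h, -⟩
    exact hvw h
  · obtain ⟨v, hv⟩ := (hξ η hη).exists_isStationaryIn_fiber hκ hκω (f := e) fun β hβ => hβ.2.1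
    obtain ⟨β, ⟨⟨-, hβ, hηβ⟩, rfl⟩, hβκ⟩ := hv.exists_mem_lt (isSuccLimit_of_aleph0_lt_cof hcof)
    refine ⟨e β, hηβ, hβ.trans hβκ, hv.mono ?_⟩
    rintro γ ⟨⟨hγA, hγ, -⟩, hγv⟩
    exact ⟨hγA, hγv, hγv ▸ hγ⟩

/-- Each `Z n \ P v` can fail to be stationary for at most one of the disjoint pieces `P v` of `X`,
and there are uncountably many pieces. -/
theorem IsStationaryIn.exists_subset_isStationaryIn_diff (hκ : κ.IsRegular) (hκω : ℵ₀ < κ)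
    (hX : IsStationaryIn X κ.ord) {Z : ℕ → Set Ordinal.{0}}
    (hZ : ∀ n, IsStationaryIn (Z n) κ.ord) :
    ∃ P ⊆ X, IsStationaryIn P κ.ord ∧ ∀ n, IsStationaryIn (Z n \ P) κ.ord := by
  have hcof := aleph0_lt_cof_ord hκ hκω
  obtain ⟨P, hPX, hdisj, hP⟩ := hX.exists_pairwise_disjoint hκ hκω
  have hbad_unique (n : ℕ) {v w : Ordinal.{0}} (hv : ¬IsStationaryIn (Z n \ P v) κ.ord)
      (hw : ¬IsStationaryIn (Z n \ P w) κ.ord) : v = w := by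
    by_contra hvw
    refine (((hZ n).mono fun x hx => ?_).of_union hcof).elim hv hw
    by_cases hxv : x ∈ P v
    · exact Or.inr ⟨hx, disjoint_left.mp (hdisj hvw) hxv⟩
    · exact Or.inl ⟨hx, hxv⟩
  have hbad (n : ℕ) : ∃ b < κ.ord, ∀ v < κ.ord, ¬IsStationaryIn (Z n \ P v) κ.ord → v = b := by
    by_cases h : ∃ v < κ.ord, ¬IsStationaryIn (Z n \ P v) κ.ord
    · obtain ⟨v, hv, hvbad⟩ := h
      exact ⟨v, hv, fun w _ hw => hbad_unique n hw hvbad⟩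
    · exact ⟨0, hκ.ord_pos, fun v hv hvbad => (h ⟨v, hv, hvbad⟩).elim⟩
  choose b hb hbad using hbad
  have hsup : succ (⨆ n, b n) < κ.ord :=
    (isSuccLimit_of_aleph0_lt_cof hcof).succ_lt (iSup_lt_of_lt_cof (by simpa using hcof) hb)
  obtain ⟨v, hbv, hvκ, hPv⟩ := hP _ hsup
  refine ⟨P v, hPX v, hPv, fun n => by_contra fun hn => ?_⟩
  have hbv' : b n < v := (Ordinal.le_iSup b n).trans_lt (succ_le_iff.mp hbv)
  exact hbv'.ne (hbad n v hvκ hn).symm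

theorem exists_pairwise_disjoint_isStationaryIn_subsets (hκ : κ.IsRegular) (hκω : ℵ₀ < κ)
    {T : ℕ → Set Ordinal.{0}} (hT : ∀ n, IsStationaryIn (T n) κ.ord) (ν : ℕ → ℕ) :
    ∃ P : ℕ → Set Ordinal.{0}, (∀ m, P m ⊆ T (ν m)) ∧ (∀ m, IsStationaryIn (P m) κ.ord) ∧
      Pairwise (Disjoint on P) := by
  have hstep (m : ℕ) (R : Set Ordinal.{0}) : ∃ P, (∀ n, IsStationaryIn (T n \ R) κ.ord) →
      P ⊆ T (ν m) \ R ∧ IsStationaryIn P κ.ord ∧ ∀ n, IsStationaryIn (T n \ (R ∪ P)) κ.ord := by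
    by_cases hR : ∀ n, IsStationaryIn (T n \ R) κ.ord
    · obtain ⟨P, hP, hPs, hdiff⟩ := (hR (ν m)).exists_subset_isStationaryIn_diff hκ hκω hR
      exact ⟨P, fun _ => ⟨hP, hPs, fun n => sdiff_sdiff ▸ hdiff n⟩⟩
    · exact ⟨∅, fun h => (hR h).elim⟩
  choose piece hpiece using hstep
  set R : ℕ → Set Ordinal.{0} := fun m => Nat.rec ∅ (fun m R => R ∪ piece m R) m
  have hR_succ (m : ℕ) : R (m + 1) = R m ∪ piece m (R m) := rfl
  have hR (m : ℕ) : ∀ n, IsStationaryIn (T n \ R m) κ.ord := by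
    induction m with
    | zero => simpa [R] using hT
    | succ m ih => exact hR_succ m ▸ (hpiece m _ ih).2.2
  refine ⟨fun m => piece m (R m), fun m => (hpiece m _ (hR m)).1.trans sdiff_subset,
    fun m => (hpiece m _ (hR m)).2.1, (pairwise_disjoint_on _).mpr fun j m hjm => ?_⟩
  have hR_mono : Monotone R := monotone_nat_of_le_succ fun m => hR_succ m ▸ subset_union_left
  have hjR : piece j (R j) ⊆ R m := (hR_succ j ▸ subset_union_right).trans (hR_mono hjm)
  exact disjoint_sdiff_right.mono hjR (hpiece m _ (hR m)).1

end Regular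

/-- `DSR(1, S)` at `κ`. -/
def DSROne (κ : Cardinal.{0}) (S : Set Ordinal.{0}) : Prop :=
  ∀ T : Ordinal.{0} → Set Ordinal.{0}, (∀ α < κ.ord, T α ⊆ S ∧ IsStationaryIn (T α) κ.ord) →
    ∃ γ < κ.ord, ℵ₀ < γ.cof ∧ ∃ F, IsClubIn F γ ∧ ∀ α ∈ F, IsStationaryIn (T α ∩ Iio γ) γ

open Classical in
noncomputable def succPiece (P : ℕ → Set Ordinal.{0}) (α : Ordinal.{0}) : Set Ordinal.{0} :=
  if h : ∃ m, α ∈ P m then P (h.choose + 1) else P 0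

theorem succPiece_eq {P : ℕ → Set Ordinal.{0}} (hP : Pairwise (Disjoint on P)) {m : ℕ}
    {α : Ordinal.{0}} (hα : α ∈ P m) : succPiece P α = P (m + 1) := by
  have h : ∃ m, α ∈ P m := ⟨m, hα⟩
  have hm : h.choose = m := by_contra fun hne => (hP hne).ne_of_mem h.choose_spec hα rfl
  rw [succPiece, dif_pos h, hm]

theorem exists_succPiece_eq (P : ℕ → Set Ordinal.{0}) (α : Ordinal.{0}) :
    ∃ j, succPiece P α = P j := by
  unfold succPiece
  split_ifs
  exacts [⟨_, rfl⟩, ⟨_, rfl⟩]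

theorem DSROne.exists_forall_ge_reflect {κ : Cardinal.{0}} {S : Set Ordinal.{0}} (h : DSROne κ S)
    {P : ℕ → Set Ordinal.{0}} (hPS : ∀ m, P m ⊆ S) (hP : ∀ m, IsStationaryIn (P m) κ.ord)
    (hdisj : Pairwise (Disjoint on P)) :
    ∃ γ < κ.ord, ℵ₀ < γ.cof ∧ ∃ j, ∀ m ≥ j, IsStationaryIn (P m ∩ Iio γ) γ := by
  obtain ⟨γ, hγ, hγcof, F, hF, hFrefl⟩ := h (succPiece P) fun α _ => by
    obtain ⟨j, hj⟩ := exists_succPiece_eq P α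
    exact hj ▸ ⟨hPS j, hP j⟩
  obtain ⟨α, hαF, -⟩ := hF.2.1 0 (isSuccLimit_of_aleph0_lt_cof hγcof).pos
  obtain ⟨j, hj⟩ := exists_succPiece_eq P α
  refine ⟨γ, hγ, hγcof, j, fun m hm => ?_⟩
  induction m, hm using Nat.le_induction with
  | base => exact hj ▸ hFrefl α hαF
  | succ m _ ih =>
    obtain ⟨x, ⟨hxP, -⟩, hxF⟩ := ih F hF
    exact succPiece_eq hdisj hxP ▸ hFrefl x hxF

theorem DSR_one_implies_Refl_omega_general (lam : Cardinal.{0})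
    (hreg : lam.IsRegular) (hunc : Cardinal.aleph0 < lam)
    (S : Set Ordinal.{0})
    (hdsr : ∀ T : Ordinal.{0} → Set Ordinal.{0},
      (∀ α < lam.ord, T α ⊆ S ∧ IsStationaryIn (T α) lam.ord) →
      ∃ γ < lam.ord, Cardinal.aleph0 < γ.cof ∧
        ∃ F, IsClubIn F γ ∧ ∀ α ∈ F, IsStationaryIn (T α ∩ Set.Iio γ) γ) :
    ∀ T : ℕ → Set Ordinal.{0},
      (∀ n, T n ⊆ S ∧ IsStationaryIn (T n) lam.ord) →
      ∃ δ < lam.ord, Cardinal.aleph0 < δ.cof ∧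
        ∀ n, IsStationaryIn (T n ∩ Set.Iio δ) δ := by
  intro T hT
  obtain ⟨P, hPT, hP, hdisj⟩ :=
    exists_pairwise_disjoint_isStationaryIn_subsets hreg hunc (fun n => (hT n).2) (·.unpair.1)
  obtain ⟨γ, hγ, hγcof, j, hj⟩ :=
    DSROne.exists_forall_ge_reflect hdsr (fun m => (hPT m).trans (hT _).1) hP hdisj
  refine ⟨γ, hγ, hγcof, fun n => (hj (Nat.pair n j) (Nat.right_le_pair n j)).mono ?_⟩
  simpa using inter_subset_inter_left (Iio γ) (hPT (Nat.pair n j))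

/-- For a regular uncountable cardinal `λ` and stationary `S ⊆ λ`,
`DSR(1, S)` implies `Refl(ω, S)`. -/
theorem DSR_one_implies_Refl_omega (lam : Cardinal.{0})
    (hreg : lam.IsRegular) (hunc : Cardinal.aleph0 < lam)
    (S : Set Ordinal.{0}) (hSsub : S ⊆ Set.Iio lam.ord)
    (hSstat : IsStationaryIn S lam.ord)
    (hdsr : ∀ T : Ordinal.{0} → Set Ordinal.{0},
      (∀ α < lam.ord, T α ⊆ S ∧ IsStationaryIn (T α) lam.ord) →
      ∃ γ < lam.ord, Cardinal.aleph0 < γ.cof ∧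
        ∃ F, IsClubIn F γ ∧ ∀ α ∈ F, IsStationaryIn (T α ∩ Set.Iio γ) γ) :
    ∀ T : ℕ → Set Ordinal.{0},
      (∀ n, T n ⊆ S ∧ IsStationaryIn (T n) lam.ord) →
      ∃ δ < lam.ord, Cardinal.aleph0 < δ.cof ∧
        ∀ n, IsStationaryIn (T n ∩ Set.Iio δ) δ :=
  DSR_one_implies_Refl_omega_general lam hreg hunc S hdsr
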